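/- arXiv:1304.6883 — 2 statements merged into one kernel-verified Lean document; each statement's English description precedes it below -/
import Mathlib

section
/- For any semi-thin association schemoid (C,S,T), the category R̃(C,S,T) — with object set S₀, Hom(α,β) = _αS_β, composition τ∘σ equal to the unique μ ∈ _αS_γ with p^μ_{τσ} = 1, and identity of α given by α itself — is a well-defined category and moreover a groupoid, in which the inverse of σ ∈ _αS_β is σ* = T(σ) ∈ _βS_α. -/
open CategoryTheory

universe v u

/-- The set of all morphisms of a category, bundled with their endpoints. -/
def Mor (C : Type u) [Category.{v} C] : Type max u v := Σ (x y : C), x ⟶ y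

namespace Mor
variable {C : Type u} [Category.{v} C]
/-- The source of a morphism. -/
def src (m : Mor C) : C := m.1
/-- The target of a morphism. -/
def tgt (m : Mor C) : C := m.2.1
end Mor

/-- The identity of `x` as an element of `Mor C`. -/
def idMor {C : Type u} [Category.{v} C] (x : C) : Mor C := ⟨x, x, 𝟙 x⟩

/-- Bundle a morphism into `Mor C`. -/
def mk3 {C : Type u} [Category.{v} C] {x y : C} (f : x ⟶ y) : Mor C := ⟨x, y, f⟩

/-- `IsComp a b m` holds iff `a` and `b` are composable (the target of `b` is the
source of `a`) and the composite `a ∘ b` equals `m`. -/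
def IsComp {C : Type u} [Category.{v} C] (a b m : Mor C) : Prop :=
  ∃ (x y z : C) (f : x ⟶ y) (g : y ⟶ z), b = mk3 f ∧ a = mk3 g ∧ m = mk3 (f ≫ g)

/-- The fiber over `m` of the concatenation map `π_{στ} : σ ×_{ob C} τ → mor C`,
where `σ` is the class of the second (outer) factor and `τ` that of the first
(inner) factor. -/
def compFiber {C : Type u} [Category.{v} C] (σ τ : Set (Mor C)) (m : Mor C) :
    Set (Mor C × Mor C) :=
  {p | p.1 ∈ σ ∧ p.2 ∈ τ ∧ IsComp p.1 p.2 m}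

/-- A quasi-schemoid: a small category together with a partition of its set of
morphisms satisfying the concatenation axiom. -/
structure QuasiSchemoid (C : Type u) [Category.{v} C] where
  part : Set (Set (Mor C))
  isPartition : Setoid.IsPartition part
  concat : ∀ σ ∈ part, ∀ τ ∈ part, ∀ μ ∈ part, ∀ f ∈ μ, ∀ g ∈ μ,
    Nonempty ((compFiber σ τ f : Set (Mor C × Mor C)) ≃ (compFiber σ τ g : Set (Mor C × Mor C)))

/-- `p^μ_{τσ} = n` : every `m ∈ μ` has exactly `n` factorizations with outer factor
in `τ` and inner factor in `σ`. -/
def structEq {C : Type u} [Category.{v} C] (τ σ μ : Set (Mor C)) (n : ℕ) : Prop :=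
  ∀ m ∈ μ, Nat.card (compFiber τ σ m) = n

/-- The set `J₀` of identities. -/
def J0 (C : Type u) [Category.{v} C] : Set (Mor C) := {m | ∃ x : C, m = idMor x}

/-- A quasi-schemoid is unital if every class meeting `J₀` is contained in `J₀`. -/
def QuasiSchemoid.IsUnital {C : Type u} [Category.{v} C] (Q : QuasiSchemoid C) : Prop :=
  ∀ σ ∈ Q.part, (σ ∩ J0 C).Nonempty → σ ⊆ J0 C

/-- A contravariant endofunctor. -/
structure ContraFunctor (C : Type u) [Category.{v} C] where
  obj : C → C
  map : ∀ {x y : C}, (x ⟶ y) → (obj y ⟶ obj x)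
  map_id : ∀ x : C, map (𝟙 x) = 𝟙 (obj x)
  map_comp : ∀ {x y z : C} (f : x ⟶ y) (g : y ⟶ z), map (f ≫ g) = map g ≫ map f

/-- The action of a contravariant functor on bundled morphisms. -/
def ContraFunctor.onMor {C : Type u} [Category.{v} C] (T : ContraFunctor C) (m : Mor C) :
    Mor C :=
  ⟨T.obj m.2.1, T.obj m.1, T.map m.2.2⟩

/-- The set `J` of endomorphisms. -/
def JEndo (C : Type u) [Category.{v} C] : Set (Mor C) := {m | m.src = m.tgt}

/-- An association schemoid. -/
structure AssnSchemoid (C : Type u) [Category.{v} C] extends QuasiSchemoid C where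
  T : ContraFunctor C
  T_invol : ∀ m : Mor C, T.onMor (T.onMor m) = m
  T_part : ∀ σ ∈ part, T.onMor '' σ ∈ part
  endo : ∀ σ ∈ part, (σ ∩ JEndo C).Nonempty → σ ⊆ JEndo C

universe v₂ u₂

/-- The action of a functor on bundled morphisms. -/
def morMap {C : Type u} {D : Type u₂} [Category.{v} C] [Category.{v₂} D] (F : C ⥤ D)
    (m : Mor C) : Mor D :=
  ⟨F.obj m.1, F.obj m.2.1, F.map m.2.2⟩

/-- A functor is a morphism of quasi-schemoids if each class of the source partition is
mapped into some class of the target partition. -/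
def IsQSMor {C : Type u} {D : Type u₂} [Category.{v} C] [Category.{v₂} D]
    (SC : Set (Set (Mor C))) (SD : Set (Set (Mor D))) (F : C ⥤ D) : Prop :=
  ∀ σ ∈ SC, ∃ τ ∈ SD, morMap F '' σ ⊆ τ

/-- A morphism of association schemoids: a morphism of quasi-schemoids commuting with the
contravariant involutions. -/
def IsASMor {C : Type u} {D : Type u₂} [Category.{v} C] [Category.{v₂} D]
    (SC : Set (Set (Mor C))) (SD : Set (Set (Mor D)))
    (TC : ContraFunctor C) (TD : ContraFunctor D) (F : C ⥤ D) : Prop :=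
  IsQSMor SC SD F ∧ ∀ m : Mor C, morMap F (TC.onMor m) = TD.onMor (morMap F m)

/-- `S₀` : the classes containing some identity. -/
def S0 {C : Type u} [Category.{v} C] (S : Set (Set (Mor C))) : Set (Set (Mor C)) :=
  {α | α ∈ S ∧ ∃ x : C, idMor x ∈ α}

/-- `_αS_β = {σ ∈ S | p^σ_{σα} = p^σ_{βσ} = 1}`. -/
def hom2 {C : Type u} [Category.{v} C] (S : Set (Set (Mor C))) (α β : Set (Mor C)) :
    Set (Set (Mor C)) :=
  {σ | σ ∈ S ∧ structEq σ α σ 1 ∧ structEq β σ σ 1}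

/-- The partition class containing a given morphism. -/
def classOf {C : Type u} [Category.{v} C] (S : Set (Set (Mor C))) (m : Mor C) :
    Set (Mor C) :=
  {m' | ∃ σ ∈ S, m ∈ σ ∧ m' ∈ σ}
/-- The inverse of a bundled morphism in a groupoid. -/
def morInv {C : Type u} [Groupoid.{v} C] (m : Mor C) : Mor C :=
  ⟨m.2.1, m.1, Groupoid.inv m.2.2⟩

/-- A semi-thin association schemoid. -/
def IsSemiThin {C : Type u} [Groupoid.{v} C] (A : AssnSchemoid C) : Prop :=
  A.toQuasiSchemoid.IsUnital ∧
  (∀ σ ∈ A.part, ∀ x : C, ({f | f ∈ σ ∧ Mor.src f = x} : Set (Mor C)).Subsingleton) ∧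
  (∀ m : Mor C, A.T.onMor m = morInv m)

/-- A thin association schemoid with base point set `V`. -/
def IsThin {C : Type u} [Groupoid.{v} C] (A : AssnSchemoid C) (V : Set C) : Prop :=
  IsSemiThin A ∧
  (∀ x y : C, Subsingleton (x ⟶ y)) ∧
  (∀ x : C, ∃! v : C, v ∈ V ∧ Nonempty (x ⟶ v)) ∧
  Set.BijOn (fun v => classOf A.part (idMor v)) V (S0 A.part)

/-- `pOne A τ σ μ` : the structure constant `p^μ_{τσ}` equals `1`. -/
def pOne {C : Type u} [Category.{v} C] (τ σ μ : Set (Mor C)) : Prop := structEq τ σ μ 1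

/-!
In a semi-thin schemoid a class contains at most one morphism out of any object. Applying the
concatenation axiom to `σ* ∘ σ` over a class `α ∈ S₀` moves the factorisation `1_x = f⁻¹ ∘ f`
to every other identity of `α`, so a class `σ ∈ _αS_β` is the graph of a bijection
`X_α → X_β`. Consequently, for `σ ∈ _αS_β` and `τ ∈ _βS_γ` all composites `g ∘ f`
(`f ∈ σ`, `g ∈ τ`) lie in one class `μ`, and `p^μ_{τσ} = 1` holds for this `μ` and no
other. Units, associativity and inverses of `R̃` are then checked on a single representative,
where they are those of the groupoid `C`.
-/

section Category

variable {C : Type u} [Category.{v} C]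

lemma isComp_mk3 {x y z : C} (f : x ⟶ y) (g : y ⟶ z) :
    IsComp (mk3 g) (mk3 f) (mk3 (f ≫ g)) :=
  ⟨x, y, z, f, g, rfl, rfl, rfl⟩

lemma isComp_idMor_src (m : Mor C) : IsComp m (idMor m.src) m := by
  obtain ⟨x, y, f⟩ := m
  have h := isComp_mk3 (𝟙 x) f
  rwa [Category.id_comp] at h

lemma isComp_idMor_tgt (m : Mor C) : IsComp (idMor m.tgt) m m := by
  obtain ⟨x, y, f⟩ := m
  have h := isComp_mk3 f (𝟙 y)
  rwa [Category.comp_id] at h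

namespace IsComp

variable {a b m m' : Mor C}

lemma src_eq (h : IsComp a b m) : m.src = b.src := by
  obtain ⟨x, y, z, f, g, rfl, rfl, rfl⟩ := h
  rfl

lemma tgt_eq (h : IsComp a b m) : m.tgt = a.tgt := by
  obtain ⟨x, y, z, f, g, rfl, rfl, rfl⟩ := h
  rfl

lemma src_eq_tgt (h : IsComp a b m) : a.src = b.tgt := by
  obtain ⟨x, y, z, f, g, rfl, rfl, rfl⟩ := h
  rfl

lemma unique (h : IsComp a b m) (h' : IsComp a b m') : m = m' := by
  obtain ⟨x, y, z, f, g, rfl, rfl, rfl⟩ := h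
  obtain ⟨x', y', z', f', g', hb, ha, rfl⟩ := h'
  cases hb
  cases ha
  rfl

lemma eq_of_idMor_right {u : C} (h : IsComp a (idMor u) m) : a = m := by
  obtain ⟨x, y, z, f, g, hb, rfl, rfl⟩ := h
  cases hb
  exact congrArg mk3 (Category.id_comp g).symm

lemma eq_of_idMor_left {u : C} (h : IsComp (idMor u) b m) : b = m := by
  obtain ⟨x, y, z, f, g, rfl, ha, rfl⟩ := h
  cases ha
  exact congrArg mk3 (Category.comp_id f).symm

end IsComp

variable {α β σ τ μ : Set (Mor C)} {m : Mor C}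

lemma exists_isComp_of_pOne (h : pOne τ σ μ) (hm : m ∈ μ) :
    ∃ a ∈ τ, ∃ b ∈ σ, IsComp a b m := by
  obtain ⟨⟨a, b⟩, ha, hb, hab⟩ :=
    Set.nonempty_of_ncard_ne_zero (ne_of_eq_of_ne (h m hm) one_ne_zero)
  exact ⟨a, ha, b, hb, hab⟩

lemma idMor_src_mem_of_pOne (hα : α ⊆ J0 C) (h : pOne σ α σ) (hm : m ∈ σ) :
    idMor m.src ∈ α := by
  obtain ⟨a, -, b, hb, hab⟩ := exists_isComp_of_pOne h hm
  obtain ⟨u, rfl⟩ := hα hb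
  rwa [hab.src_eq]

lemma idMor_tgt_mem_of_pOne (hβ : β ⊆ J0 C) (h : pOne β σ σ) (hm : m ∈ σ) :
    idMor m.tgt ∈ β := by
  obtain ⟨a, ha, b, -, hab⟩ := exists_isComp_of_pOne h hm
  obtain ⟨u, rfl⟩ := hβ ha
  rwa [hab.tgt_eq]

lemma pOne_of_idMor_src_mem (hα : α ⊆ J0 C) (h : ∀ m ∈ σ, idMor m.src ∈ α) :
    pOne σ α σ := by
  refine fun m hm => Set.ncard_eq_one.mpr ⟨(m, idMor m.src),
    Set.eq_singleton_iff_unique_mem.mpr ⟨⟨hm, h m hm, isComp_idMor_src m⟩, ?_⟩⟩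
  rintro ⟨a, b⟩ ⟨-, hb, hab : IsComp a b m⟩
  obtain ⟨u, rfl⟩ := hα hb
  have hu : m.src = u := hab.src_eq
  rw [hab.eq_of_idMor_right, hu]

lemma pOne_of_idMor_tgt_mem (hβ : β ⊆ J0 C) (h : ∀ m ∈ σ, idMor m.tgt ∈ β) :
    pOne β σ σ := by
  refine fun m hm => Set.ncard_eq_one.mpr ⟨(idMor m.tgt, m),
    Set.eq_singleton_iff_unique_mem.mpr ⟨⟨h m hm, hm, isComp_idMor_tgt m⟩, ?_⟩⟩
  rintro ⟨a, b⟩ ⟨ha, -, hab : IsComp a b m⟩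
  obtain ⟨u, rfl⟩ := hβ ha
  have hu : m.tgt = u := hab.tgt_eq
  rw [hab.eq_of_idMor_left, hu]

lemma mem_hom2_of_forall {S : Set (Set (Mor C))} (hα : α ⊆ J0 C) (hβ : β ⊆ J0 C) (hσ : σ ∈ S)
    (h : ∀ m ∈ σ, idMor m.src ∈ α ∧ idMor m.tgt ∈ β) : σ ∈ hom2 S α β :=
  ⟨hσ, pOne_of_idMor_src_mem hα fun m hm => (h m hm).1,
    pOne_of_idMor_tgt_mem hβ fun m hm => (h m hm).2⟩

end Category

namespace IsSemiThin

variable {C : Type u} [Groupoid.{v} C] {A : AssnSchemoid C}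
variable {α β γ σ τ μ : Set (Mor C)} {x y z : C} {φ : x ⟶ y} {ψ : y ⟶ z}

lemma S0_subset_J0 (hst : IsSemiThin A) (hα : α ∈ S0 A.part) : α ⊆ J0 C := by
  obtain ⟨hαS, x, hx⟩ := hα
  exact hst.1 α hαS ⟨idMor x, hx, x, rfl⟩

lemma eq_of_src_eq (hst : IsSemiThin A) (hσ : σ ∈ A.part) {f g : Mor C} (hf : f ∈ σ)
    (hg : g ∈ σ) (h : f.src = g.src) : f = g :=
  hst.2.1 σ hσ g.src ⟨hf, h⟩ ⟨hg, rfl⟩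

lemma onMor_eq_morInv (hst : IsSemiThin A) (m : Mor C) : A.T.onMor m = morInv m :=
  hst.2.2 m

lemma mk3_inv_mem_onMor_image (hst : IsSemiThin A) (hφ : mk3 φ ∈ σ) :
    mk3 (Groupoid.inv φ) ∈ A.T.onMor '' σ :=
  ⟨_, hφ, hst.onMor_eq_morInv _⟩

/-- The concatenation axiom for `ρ* ∘ ρ` over the class `δ` moves the factorisation
`1_x = m⁻¹ ∘ m` to any other identity `1_y ∈ δ`. -/
lemma exists_mem_src_eq (hst : IsSemiThin A) {ρ δ : Set (Mor C)} (hρ : ρ ∈ A.part)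
    (hδ : δ ∈ A.part) {m : Mor C} (hm : m ∈ ρ) (hx : idMor m.src ∈ δ) (hy : idMor y ∈ δ) :
    ∃ m' ∈ ρ, m'.src = y := by
  obtain ⟨x, x', f⟩ := m
  have hfib : (mk3 (Groupoid.inv f), mk3 f) ∈ compFiber (A.T.onMor '' ρ) ρ (idMor x) := by
    refine ⟨hst.mk3_inv_mem_onMor_image hm, hm, ?_⟩
    have h := isComp_mk3 f (Groupoid.inv f)
    rwa [Groupoid.comp_inv] at h
  obtain ⟨e⟩ := A.concat _ (A.T_part ρ hρ) ρ hρ δ hδ _ hx _ hy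
  obtain ⟨-, hb, hab⟩ := (e ⟨_, hfib⟩).2
  exact ⟨_, hb, hab.src_eq.symm⟩

lemma card_compFiber_mk3_comp (hst : IsSemiThin A) (hσ : σ ∈ A.part) (hτ : τ ∈ A.part)
    (hφ : mk3 φ ∈ σ) (hψ : mk3 ψ ∈ τ) : Nat.card (compFiber τ σ (mk3 (φ ≫ ψ))) = 1 := by
  refine Set.ncard_eq_one.mpr ⟨(mk3 ψ, mk3 φ),
    Set.eq_singleton_iff_unique_mem.mpr ⟨⟨hψ, hφ, isComp_mk3 φ ψ⟩, ?_⟩⟩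
  rintro ⟨a, b⟩ ⟨ha, hb, hab : IsComp a b _⟩
  obtain rfl : b = mk3 φ := hst.eq_of_src_eq hσ hb hφ hab.src_eq.symm
  obtain rfl : a = mk3 ψ := hst.eq_of_src_eq hτ ha hψ hab.src_eq_tgt
  rfl

lemma pOne_of_mk3_comp_mem (hst : IsSemiThin A) (hσ : σ ∈ A.part) (hτ : τ ∈ A.part)
    (hμ : μ ∈ A.part) (hφ : mk3 φ ∈ σ) (hψ : mk3 ψ ∈ τ) (hφψ : mk3 (φ ≫ ψ) ∈ μ) :
    pOne τ σ μ := fun m hm =>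
  (Nat.card_congr (A.concat τ hτ σ hσ μ hμ m hm _ hφψ).some).trans
    (hst.card_compFiber_mk3_comp hσ hτ hφ hψ)

/-- Transport inside `μ` to a morphism with source `x`; its factorisation through `σ` and `τ`
must then be `(φ, ψ)`, since classes are determined by sources. -/
lemma mk3_comp_mem_of_pOne (hst : IsSemiThin A) (hα : α ∈ S0 A.part) (hσ : σ ∈ A.part)
    (hσα : pOne σ α σ) (hτ : τ ∈ A.part) (hμ : μ ∈ A.part) (h : pOne τ σ μ)
    (hφ : mk3 φ ∈ σ) (hψ : mk3 ψ ∈ τ) : mk3 (φ ≫ ψ) ∈ μ := by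
  have hαJ := hst.S0_subset_J0 hα
  obtain ⟨m, hm⟩ := Setoid.nonempty_of_mem_partition A.isPartition hμ
  obtain ⟨_, -, b, hb, hab⟩ := exists_isComp_of_pOne h hm
  have hm_src : idMor m.src ∈ α := hab.src_eq ▸ idMor_src_mem_of_pOne hαJ hσα hb
  obtain ⟨m', hm', hm'_src⟩ := hst.exists_mem_src_eq hμ hα.1 hm hm_src
    (idMor_src_mem_of_pOne hαJ hσα hφ)
  obtain ⟨a', ha', b', hb', hab'⟩ := exists_isComp_of_pOne h hm'
  obtain rfl : b' = mk3 φ := hst.eq_of_src_eq hσ hb' hφ (hab'.src_eq.symm.trans hm'_src)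
  obtain rfl : a' = mk3 ψ := hst.eq_of_src_eq hτ ha' hψ hab'.src_eq_tgt
  rwa [← hab'.unique (isComp_mk3 φ ψ)]

lemma pOne_iff_mk3_comp_mem (hst : IsSemiThin A) (hα : α ∈ S0 A.part) (hσ : σ ∈ A.part)
    (hσα : pOne σ α σ) (hτ : τ ∈ A.part) (hμ : μ ∈ A.part) (hφ : mk3 φ ∈ σ)
    (hψ : mk3 ψ ∈ τ) : pOne τ σ μ ↔ mk3 (φ ≫ ψ) ∈ μ :=
  ⟨fun h => hst.mk3_comp_mem_of_pOne hα hσ hσα hτ hμ h hφ hψ,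
    hst.pOne_of_mk3_comp_mem hσ hτ hμ hφ hψ⟩

lemma exists_mk3_mem (hst : IsSemiThin A) (hα : α ∈ S0 A.part) (hσ : σ ∈ A.part)
    (hσα : pOne σ α σ) (hx : idMor x ∈ α) : ∃ (y : C) (f : x ⟶ y), mk3 f ∈ σ := by
  obtain ⟨m, hm⟩ := Setoid.nonempty_of_mem_partition A.isPartition hσ
  obtain ⟨⟨x', y, f⟩, hf, rfl⟩ := hst.exists_mem_src_eq hσ hα.1 hm
    (idMor_src_mem_of_pOne (hst.S0_subset_J0 hα) hσα hm) hx
  exact ⟨y, f, hf⟩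

lemma exists_mk3_mem_composable (hst : IsSemiThin A) (hβ : β ∈ S0 A.part)
    (hσ : σ ∈ hom2 A.part α β) (hτ : τ ∈ hom2 A.part β γ) (hφ : mk3 φ ∈ σ) :
    ∃ (z : C) (ψ : y ⟶ z), mk3 ψ ∈ τ :=
  hst.exists_mk3_mem hβ hτ.1 hτ.2.1 (idMor_tgt_mem_of_pOne (hst.S0_subset_J0 hβ) hσ.2.2 hφ)

lemma mem_hom2_self (hst : IsSemiThin A) (hα : α ∈ S0 A.part) : α ∈ hom2 A.part α α := by
  have hαJ := hst.S0_subset_J0 hα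
  refine mem_hom2_of_forall hαJ hαJ hα.1 fun m hm => ?_
  obtain ⟨u, rfl⟩ := hαJ hm
  exact ⟨hm, hm⟩

lemma existsUnique_pOne (hst : IsSemiThin A) (hα : α ∈ S0 A.part) (hβ : β ∈ S0 A.part)
    (hγ : γ ∈ S0 A.part) (hσ : σ ∈ hom2 A.part α β) (hτ : τ ∈ hom2 A.part β γ) :
    ∃! μ, μ ∈ hom2 A.part α γ ∧ pOne τ σ μ := by
  have hαJ := hst.S0_subset_J0 hα
  have hγJ := hst.S0_subset_J0 hγ
  obtain ⟨⟨x, y, φ⟩, hφ⟩ := Setoid.nonempty_of_mem_partition A.isPartition hσ.1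
  obtain ⟨z, ψ, hψ⟩ := hst.exists_mk3_mem_composable hβ hσ hτ hφ
  obtain ⟨μ, ⟨hμ, hφψ⟩, -⟩ := A.isPartition.2 (mk3 (φ ≫ ψ))
  have hp : pOne τ σ μ := hst.pOne_of_mk3_comp_mem hσ.1 hτ.1 hμ hφ hψ hφψ
  refine ⟨μ, ⟨mem_hom2_of_forall hαJ hγJ hμ fun m hm => ?_, hp⟩, ?_⟩
  · obtain ⟨a, ha, b, hb, hab⟩ := exists_isComp_of_pOne hp hm
    exact ⟨hab.src_eq ▸ idMor_src_mem_of_pOne hαJ hσ.2.1 hb,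
      hab.tgt_eq ▸ idMor_tgt_mem_of_pOne hγJ hτ.2.2 ha⟩
  · rintro μ' ⟨hμ', hp'⟩
    exact Setoid.eq_of_mem_eqv_class A.isPartition.2 hμ'.1
      (hst.mk3_comp_mem_of_pOne hα hσ.1 hσ.2.1 hτ.1 hμ'.1 hp' hφ hψ) hμ hφψ

lemma pOne_assoc_iff (hst : IsSemiThin A) {δ υ μ₁ μ₂ ν : Set (Mor C)} (hα : α ∈ S0 A.part)
    (hβ : β ∈ S0 A.part) (hγ : γ ∈ S0 A.part) (hσ : σ ∈ hom2 A.part α β)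
    (hτ : τ ∈ hom2 A.part β γ) (hυ : υ ∈ hom2 A.part γ δ) (hμ₁ : μ₁ ∈ hom2 A.part α γ)
    (hμ₂ : μ₂ ∈ A.part) (hν : ν ∈ A.part) (h₁ : pOne τ σ μ₁) (h₂ : pOne υ τ μ₂) :
    pOne υ μ₁ ν ↔ pOne μ₂ σ ν := by
  obtain ⟨⟨x, y, φ⟩, hφ⟩ := Setoid.nonempty_of_mem_partition A.isPartition hσ.1
  obtain ⟨z, ψ, hψ⟩ := hst.exists_mk3_mem_composable hβ hσ hτ hφ
  obtain ⟨w, χ, hχ⟩ := hst.exists_mk3_mem_composable hγ hτ hυ hψ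
  have hφψ := (hst.pOne_iff_mk3_comp_mem hα hσ.1 hσ.2.1 hτ.1 hμ₁.1 hφ hψ).1 h₁
  have hψχ := (hst.pOne_iff_mk3_comp_mem hβ hτ.1 hτ.2.1 hυ.1 hμ₂ hψ hχ).1 h₂
  rw [hst.pOne_iff_mk3_comp_mem hα hμ₁.1 hμ₁.2.1 hυ.1 hν hφψ hχ,
    hst.pOne_iff_mk3_comp_mem hα hσ.1 hσ.2.1 hμ₂ hν hφ hψχ, Category.assoc]

lemma onMor_image_mem_hom2 (hst : IsSemiThin A) (hα : α ∈ S0 A.part) (hβ : β ∈ S0 A.part)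
    (hσ : σ ∈ hom2 A.part α β) : A.T.onMor '' σ ∈ hom2 A.part β α := by
  have hαJ := hst.S0_subset_J0 hα
  have hβJ := hst.S0_subset_J0 hβ
  refine mem_hom2_of_forall hβJ hαJ (A.T_part σ hσ.1) ?_
  rintro _ ⟨f, hf, rfl⟩
  rw [hst.onMor_eq_morInv f]
  exact ⟨idMor_tgt_mem_of_pOne hβJ hσ.2.2 hf, idMor_src_mem_of_pOne hαJ hσ.2.1 hf⟩

lemma pOne_onMor_image_self (hst : IsSemiThin A) (hα : α ∈ S0 A.part)
    (hσ : σ ∈ hom2 A.part α β) : pOne (A.T.onMor '' σ) σ α := by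
  obtain ⟨⟨x, y, f⟩, hf⟩ := Setoid.nonempty_of_mem_partition A.isPartition hσ.1
  refine hst.pOne_of_mk3_comp_mem hσ.1 (A.T_part σ hσ.1) hα.1 hf
    (hst.mk3_inv_mem_onMor_image hf) ?_
  rw [Groupoid.comp_inv]
  exact idMor_src_mem_of_pOne (hst.S0_subset_J0 hα) hσ.2.1 hf

lemma pOne_self_onMor_image (hst : IsSemiThin A) (hβ : β ∈ S0 A.part)
    (hσ : σ ∈ hom2 A.part α β) : pOne σ (A.T.onMor '' σ) β := by
  obtain ⟨⟨x, y, f⟩, hf⟩ := Setoid.nonempty_of_mem_partition A.isPartition hσ.1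
  refine hst.pOne_of_mk3_comp_mem (A.T_part σ hσ.1) hσ.1 hβ.1
    (hst.mk3_inv_mem_onMor_image hf) hf ?_
  rw [Groupoid.inv_comp]
  exact idMor_tgt_mem_of_pOne (hst.S0_subset_J0 hβ) hσ.2.2 hf

end IsSemiThin

/-- Propositions 4.6 and 4.7 of Kuribayashi–Matsuo: for a semi-thin association schemoid
`(C,S,T)`, the data `R̃(C,S,T)` — objects `S₀`, hom-sets `Hom(α,β) = _αS_β`, the composite
`τ∘σ` being the unique `μ` with `p^μ_{τσ} = 1` and the identity of `α` being `α` itself —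
form a well-defined category, which is moreover a groupoid with `σ⁻¹ = σ* = T(σ)`. -/
theorem Rtilde_is_groupoid
    {C : Type u} [Groupoid.{v} C] (A : AssnSchemoid C) (hst : IsSemiThin A) :
    -- the identity `α` is an endomorphism of `α` in `R̃`
    (∀ α ∈ S0 A.part, α ∈ hom2 A.part α α) ∧
    -- composites exist and are unique
    (∀ α ∈ S0 A.part, ∀ β ∈ S0 A.part, ∀ γ ∈ S0 A.part,
      ∀ σ ∈ hom2 A.part α β, ∀ τ ∈ hom2 A.part β γ,
        ∃! μ : Set (Mor C), μ ∈ hom2 A.part α γ ∧ pOne τ σ μ) ∧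
    -- unit laws : `σ ∘ α = σ` and `β ∘ σ = σ`
    (∀ α ∈ S0 A.part, ∀ β ∈ S0 A.part, ∀ σ ∈ hom2 A.part α β,
      pOne σ α σ ∧ pOne β σ σ) ∧
    -- associativity
    (∀ α ∈ S0 A.part, ∀ β ∈ S0 A.part, ∀ γ ∈ S0 A.part, ∀ δ ∈ S0 A.part,
      ∀ σ ∈ hom2 A.part α β, ∀ τ ∈ hom2 A.part β γ, ∀ υ ∈ hom2 A.part γ δ,
      ∀ μ₁ ∈ hom2 A.part α γ, ∀ μ₂ ∈ hom2 A.part β δ,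
        pOne τ σ μ₁ → pOne υ τ μ₂ →
        ∀ ν : Set (Mor C),
          (ν ∈ hom2 A.part α δ ∧ pOne υ μ₁ ν) ↔ (ν ∈ hom2 A.part α δ ∧ pOne μ₂ σ ν)) ∧
    -- inverses : `σ* ∘ σ = α` and `σ ∘ σ* = β`
    (∀ α ∈ S0 A.part, ∀ β ∈ S0 A.part, ∀ σ ∈ hom2 A.part α β,
      A.T.onMor '' σ ∈ hom2 A.part β α ∧
      pOne (A.T.onMor '' σ) σ α ∧ pOne σ (A.T.onMor '' σ) β) :=
  ⟨fun _ hα => hst.mem_hom2_self hα,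
    fun _ hα _ hβ _ hγ _ hσ _ hτ => hst.existsUnique_pOne hα hβ hγ hσ hτ,
    fun _ _ _ _ _ hσ => ⟨hσ.2.1, hσ.2.2⟩,
    fun _ hα _ hβ _ hγ _ _ _ hσ _ hτ _ hυ _ hμ₁ _ hμ₂ h₁ h₂ _ => and_congr_right fun hν =>
      hst.pOne_assoc_iff hα hβ hγ hσ hτ hυ hμ₁ hμ₂.1 hν.1 h₁ h₂,
    fun _ hα _ hβ _ hσ => ⟨hst.onMor_image_mem_hom2 hα hβ hσ,
      hst.pOne_onMor_image_self hα hσ, hst.pOne_self_onMor_image hβ hσ⟩⟩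
end

section
/- Let H : C → K-Mod be a functor, D = π*p*H the induced natural system on C (so D_f = H(t(f)), f_* = H(f) and g^* = id), and D₊ → E →(q) C a linear extension. Suppose (C,S,T) is an association schemoid whose underlying category C is a connected groupoid with T(f) = f⁻¹ for all morphisms f. Then the quasi-schemoid (E, S̃) with S̃ = {q⁻¹(σ)}_{σ∈S} admits an association schemoid structure in which E is a groupoid, T̃(f̃) = f̃⁻¹, and q is a morphism of association schemoids; moreover, for σ, τ, μ ∈ S̃ one has p^σ_{τμ} = ♯D_g · p^{q(σ)}_{q(τ)q(μ)} for some (and hence, C being a connected groupoid, any) morphism g of C. -/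
open CategoryTheory

universe v u

universe v₂ u₂

/-- The category of factorizations `F(C)` : objects are the morphisms of `C`, and a
morphism `f → g` is a pair `(α,β)` with `α ∘ f ∘ β = g`. -/
def FactCat (C : Type u) [Category.{v} C] : Type max u v := Mor C

/-- Reinterpret an element of `Mor C` as an object of `F(C)`. -/
def toFactCat {C : Type u} [Category.{v} C] (m : Mor C) : FactCat C := m

/-- Reinterpret an object of `F(C)` as an element of `Mor C`. -/
def FactCat.toMor {C : Type u} [Category.{v} C] (m : FactCat C) : Mor C := m

instance FactCat.category (C : Type u) [Category.{v} C] : Category (FactCat C) where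
  Hom f g :=
    {p : (g.toMor.1 ⟶ f.toMor.1) × (f.toMor.2.1 ⟶ g.toMor.2.1) //
      p.1 ≫ f.toMor.2.2 ≫ p.2 = g.toMor.2.2}
  id f := ⟨(𝟙 _, 𝟙 _), by simp⟩
  comp {f g h} p q := ⟨(q.1.1 ≫ p.1.1, p.1.2 ≫ q.1.2), by
    calc (q.1.1 ≫ p.1.1) ≫ f.toMor.2.2 ≫ (p.1.2 ≫ q.1.2)
        = q.1.1 ≫ (p.1.1 ≫ f.toMor.2.2 ≫ p.1.2) ≫ q.1.2 := by simp
      _ = q.1.1 ≫ g.toMor.2.2 ≫ q.1.2 := by rw [p.2]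
      _ = h.toMor.2.2 := q.2⟩
  id_comp p := by apply Subtype.ext; simp
  comp_id p := by apply Subtype.ext; simp
  assoc p q r := by apply Subtype.ext; simp

/-- The abelian group `D_m` associated by a natural system `N : F(C) → Ab` to a
morphism `m`. -/
def elN {C : Type u} [Category.{v} C] (N : FactCat C ⥤ AddCommGrpCat.{w}) (m : Mor C) :
    Type w :=
  N.obj (toFactCat m)

noncomputable instance elN.addCommGroup {C : Type u} [Category.{v} C]
    (N : FactCat C ⥤ AddCommGrpCat.{w}) (m : Mor C) : AddCommGroup (elN N m) :=
  inferInstanceAs (AddCommGroup (N.obj (toFactCat m)))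

/-- The morphism `(f, 1) : g → g ≫ f` of `F(C)` inducing `f_*`. -/
def factPushHom {C : Type u} [Category.{v} C] {x y z : C} (g : x ⟶ y) (f : y ⟶ z) :
    toFactCat (mk3 g) ⟶ toFactCat (mk3 (g ≫ f)) :=
  ⟨(𝟙 x, f), by simp [toFactCat, FactCat.toMor, mk3]⟩

/-- The morphism `(1, g) : f → g ≫ f` of `F(C)` inducing `g^*`. -/
def factPullHom {C : Type u} [Category.{v} C] {x y z : C} (g : x ⟶ y) (f : y ⟶ z) :
    toFactCat (mk3 f) ⟶ toFactCat (mk3 (g ≫ f)) :=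
  ⟨(g, 𝟙 z), by simp [toFactCat, FactCat.toMor, mk3]⟩

/-- `f_* : D_g → D_{f∘g}` (post-composition by `f`). -/
def fpush {C : Type u} [Category.{v} C] (N : FactCat C ⥤ AddCommGrpCat.{w}) {x y z : C}
    (g : x ⟶ y) (f : y ⟶ z) : elN N (mk3 g) → elN N (mk3 (g ≫ f)) :=
  fun a => N.map (factPushHom g f) a

/-- `g^* : D_f → D_{f∘g}` (pre-composition by `g`). -/
def fpull {C : Type u} [Category.{v} C] (N : FactCat C ⥤ AddCommGrpCat.{w}) {x y z : C}
    (g : x ⟶ y) (f : y ⟶ z) : elN N (mk3 f) → elN N (mk3 (g ≫ f)) :=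
  fun a => N.map (factPullHom g f) a

/-- Transport in the coefficients of a natural system along an equality of morphisms. -/
def elCast {C : Type u} [Category.{v} C] (N : FactCat C ⥤ AddCommGrpCat.{w}) {x y : C}
    {f g : x ⟶ y} (h : f = g) (a : elN N (mk3 f)) : elN N (mk3 g) := by
  subst h; exact a

/-- A linear extension `D₊ → E → C` of a small category `C` by a natural system
`N : F(C) → Ab` (Definition 5.1 of Kuribayashi–Matsuo, after Baues–Wirsching):
`E` has the same objects as `C`, `q` is a full functor which is the identity on
objects, each `D_f` acts transitively and effectively on `q⁻¹(f)`, and the linear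
distributivity law holds. -/
structure LinExt (C : Type u) [Category.{v} C]
    (N : FactCat C ⥤ AddCommGrpCat.{w}) where
  hom : C → C → Type w
  id' : ∀ x : C, hom x x
  comp' : ∀ {x y z : C}, hom x y → hom y z → hom x z
  id_comp' : ∀ {x y : C} (e : hom x y), comp' (id' x) e = e
  comp_id' : ∀ {x y : C} (e : hom x y), comp' e (id' y) = e
  assoc' : ∀ {w x y z : C} (a : hom w x) (b : hom x y) (c : hom y z),
    comp' (comp' a b) c = comp' a (comp' b c)
  /-- the projection `q`, identity on objects -/
  q : ∀ {x y : C}, hom x y → (x ⟶ y)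
  q_id : ∀ x : C, q (id' x) = 𝟙 x
  q_comp : ∀ {x y z : C} (e : hom x y) (e' : hom y z), q (comp' e e') = q e ≫ q e'
  /-- `q` is full -/
  q_surj : ∀ {x y : C} (f : x ⟶ y), ∃ e : hom x y, q e = f
  /-- the action of `D_f` on `q⁻¹(f)`, written `e + a` -/
  act : ∀ {x y : C} (e : hom x y), elN N (mk3 (q e)) → hom x y
  act_q : ∀ {x y : C} (e : hom x y) (a : elN N (mk3 (q e))), q (act e a) = q e
  act_zero : ∀ {x y : C} (e : hom x y), act e 0 = e
  act_add : ∀ {x y : C} (e : hom x y) (a b : elN N (mk3 (q e))),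
    act (act e a) (elCast N (act_q e a).symm b) = act e (a + b)
  /-- transitivity of the action on fibers of `q` -/
  act_trans : ∀ {x y : C} (e e' : hom x y) (h : q e = q e'),
    ∃ a : elN N (mk3 (q e)), act e a = e'
  /-- effectiveness (freeness) of the action -/
  act_free : ∀ {x y : C} (e : hom x y) (a : elN N (mk3 (q e))), act e a = e → a = 0
  /-- the linear distributivity law `(f₀+α)(g₀+β) = f₀g₀ + f_*β + g^*α` -/
  distrib : ∀ {x y z : C} (g₀ : hom x y) (f₀ : hom y z)
    (β : elN N (mk3 (q g₀))) (α : elN N (mk3 (q f₀))),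
    comp' (act g₀ β) (act f₀ α) =
      act (comp' g₀ f₀)
        (elCast N (q_comp g₀ f₀).symm
          (fpush N (q g₀) (q f₀) β + fpull N (q g₀) (q f₀) α))

/-- The total category `E` of a linear extension. -/
def LinExt.Carrier {C : Type u} [Category.{v} C]
    {N : FactCat C ⥤ AddCommGrpCat.{w}} (_ : LinExt C N) : Type u := C

instance LinExt.category {C : Type u} [Category.{v} C]
    {N : FactCat C ⥤ AddCommGrpCat.{w}} (L : LinExt C N) : Category L.Carrier where
  Hom x y := L.hom x y
  id x := L.id' x
  comp e e' := L.comp' e e'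
  id_comp e := L.id_comp' e
  comp_id e := L.comp_id' e
  assoc a b c := L.assoc' a b c

/-- The projection functor `q : E ⥤ C` of a linear extension. -/
def LinExt.qFunctor {C : Type u} [Category.{v} C]
    {N : FactCat C ⥤ AddCommGrpCat.{w}} (L : LinExt C N) : L.Carrier ⥤ C where
  obj x := x
  map e := L.q e
  map_id x := L.q_id x
  map_comp e e' := L.q_comp e e'

/-- The partition `S̃ = {q⁻¹(σ)}_{σ ∈ S}` of `mor E`. -/
def preimagePart {C : Type u} [Category.{v} C] {N : FactCat C ⥤ AddCommGrpCat.{w}}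
    (L : LinExt C N) (S : Set (Set (Mor C))) : Set (Set (Mor L.Carrier)) :=
  {s | ∃ σ ∈ S, s = morMap L.qFunctor ⁻¹' σ}

/-- A proper morphism of quasi-schemoids: a morphism which is injective on the
partitions. -/
def IsProperQSMor {C : Type u} {D : Type u₂} [Category.{v} C] [Category.{v₂} D]
    (SC : Set (Set (Mor C))) (SD : Set (Set (Mor D))) (F : C ⥤ D) : Prop :=
  IsQSMor SC SD F ∧
    ∀ σ₁ ∈ SC, ∀ σ₂ ∈ SC, ∀ τ ∈ SD,
      morMap F '' σ₁ ⊆ τ → morMap F '' σ₂ ⊆ τ → σ₁ = σ₂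

/-- The natural system `D = π* p* H` induced by a functor `H` on `C` :
`D_f = H(t(f))`, `f_* = H(f)`, `g^* = id`. -/
def inducedNS {C : Type u} [Category.{v} C] (H : C ⥤ AddCommGrpCat.{w}) :
    FactCat C ⥤ AddCommGrpCat.{w} where
  obj m := H.obj m.toMor.2.1
  map {f g} φ := H.map φ.1.2
  map_id f := H.map_id _
  map_comp φ ψ := H.map_comp _ _

/-!
Because `g^* = id` for the induced natural system, the distributivity law reads
`e ∘ (f₀ + α) = e ∘ f₀ + α`; correcting a lift of `q(e)⁻¹` by the defect of `e ∘ f₀` from the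
identity therefore gives a right inverse of `e`, so `E` is a groupoid. In a groupoid a
factorization `m = a ∘ c` is determined by its inner factor `c`, and `c` ranges over all lifts of
the inner factors of the factorizations of `q(m)` in `C`. The lifts of a morphism `c` of `C` form a
`D_c`-torsor, and `D_c = H(t(c)) ≅ D_g` as `C` is a connected groupoid, so the fiber of `π` over
`m` is the fiber over `q(m)` times `D_g`.
-/

universe w₁

theorem Setoid.IsPartition.preimage_of_surjective {α β : Type*} {f : α → β}
    (hf : Function.Surjective f) {c : Set (Set β)} (hc : Setoid.IsPartition c) :
    Setoid.IsPartition {s | ∃ σ ∈ c, s = f ⁻¹' σ} := by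
  refine ⟨?_, fun a => ?_⟩
  · rintro ⟨σ, hσ, hempty⟩
    obtain ⟨b, hb⟩ := Set.nonempty_iff_ne_empty.mpr (fun h : σ = ∅ => hc.1 (h ▸ hσ))
    obtain ⟨a, rfl⟩ := hf b
    exact (hempty ▸ hb : a ∈ (∅ : Set α))
  · obtain ⟨σ, ⟨hσ, haσ⟩, huniq⟩ := hc.2 (f a)
    refine ⟨f ⁻¹' σ, ⟨⟨σ, hσ, rfl⟩, haσ⟩, ?_⟩
    rintro s ⟨⟨σ', hσ', rfl⟩, has⟩
    rw [huniq σ' ⟨hσ', has⟩]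

theorem nonempty_preimage_equiv_prod {α β K : Type*} (φ : α → β) (s : Set β)
    (hfib : ∀ b, Nonempty ({a // φ a = b} ≃ K)) : Nonempty (φ ⁻¹' s ≃ s × K) :=
  ⟨(Equiv.sigmaSubtypeFiberEquivSubtype φ fun _ => Iff.rfl).symm.trans
    ((Equiv.sigmaCongrRight fun b : s => (hfib b).some).trans (Equiv.sigmaEquivProd s K))⟩

section IsComp

variable {C : Type u} [Category.{v} C]

theorem isComp_mk3_iff {x y z : C} (a : Mor C) (f : x ⟶ y) (e : x ⟶ z) :
    IsComp a (mk3 f) (mk3 e) ↔ ∃ g : y ⟶ z, a = mk3 g ∧ f ≫ g = e := by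
  constructor
  · rintro ⟨x', y', z', f', g, hf, rfl, he⟩
    obtain ⟨rfl, hf⟩ := Sigma.mk.inj_iff.mp hf
    obtain ⟨rfl, hf⟩ := Sigma.mk.inj_iff.mp (eq_of_heq hf)
    obtain ⟨-, he⟩ := Sigma.mk.inj_iff.mp he
    obtain ⟨rfl, he⟩ := Sigma.mk.inj_iff.mp (eq_of_heq he)
    exact ⟨g, rfl, (eq_of_heq hf) ▸ (eq_of_heq he).symm⟩
  · rintro ⟨g, rfl, rfl⟩
    exact ⟨x, y, z, f, g, rfl, rfl, rfl⟩

theorem IsComp.src_eq_s10 {a c m : Mor C} (h : IsComp a c m) : c.src = m.src := by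
  obtain ⟨x, y, z, f, g, rfl, rfl, rfl⟩ := h
  rfl

theorem IsComp.map {D : Type u₂} [Category.{v₂} D] (F : C ⥤ D) {a c m : Mor C}
    (h : IsComp a c m) : IsComp (morMap F a) (morMap F c) (morMap F m) := by
  obtain ⟨x, y, z, f, g, rfl, rfl, rfl⟩ := h
  refine ⟨F.obj x, F.obj y, F.obj z, F.map f, F.map g, rfl, rfl, ?_⟩
  simp only [morMap, mk3, F.map_comp]
  rfl

theorem IsComp.left_unique {a a' c m : Mor C} [Epi c.2.2] (h : IsComp a c m)
    (h' : IsComp a' c m) : a = a' := by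
  obtain ⟨x, y, f⟩ := c
  obtain ⟨x', z, e⟩ := m
  obtain rfl : x = x' := h.src_eq_s10
  obtain ⟨g, rfl, hg⟩ := (isComp_mk3_iff a f e).mp h
  obtain ⟨g', rfl, hg'⟩ := (isComp_mk3_iff a' f e).mp h'
  have : Epi f := ‹Epi _›
  rw [cancel_epi f |>.mp (hg.trans hg'.symm)]

theorem exists_isComp_of_isIso {c m : Mor C} [IsIso c.2.2] (h : c.src = m.src) :
    ∃ a, IsComp a c m := by
  obtain ⟨x, y, f⟩ := c
  obtain ⟨x', z, e⟩ := m
  obtain rfl : x = x' := h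
  have : IsIso f := ‹IsIso _›
  exact ⟨mk3 (inv f ≫ e), (isComp_mk3_iff _ f e).mpr ⟨_, rfl, by simp⟩⟩

theorem injOn_snd_compFiber (hepi : ∀ c : Mor C, Epi c.2.2) (σ τ : Set (Mor C)) (m : Mor C) :
    Set.InjOn Prod.snd (compFiber σ τ m) := by
  rintro ⟨a, c⟩ ⟨-, -, h⟩ ⟨a', c'⟩ ⟨-, -, h'⟩ (rfl : c = c')
  have := hepi c
  rw [IsComp.left_unique (a := a) (a' := a') (c := c) h h']

end IsComp

theorem isIso_of_forall_exists_comp_eq_id {D : Type u} [Category.{v} D]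
    (h : ∀ {x y : D} (f : x ⟶ y), ∃ g, f ≫ g = 𝟙 x) {x y : D} (f : x ⟶ y) : IsIso f := by
  obtain ⟨g, hfg⟩ := h f
  obtain ⟨f', hgf'⟩ := h g
  have hf' : f' = f := by
    calc f' = (f ≫ g) ≫ f' := by rw [hfg, Category.id_comp]
      _ = f := by rw [Category.assoc, hgf', Category.comp_id]
  exact ⟨g, hfg, hf' ▸ hgf'⟩

theorem mk3_injective {C : Type u} [Category.{v} C] {x y : C} :
    Function.Injective (mk3 : (x ⟶ y) → Mor C) := by
  intro f g h
  obtain ⟨-, h⟩ := Sigma.mk.inj_iff.mp h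
  exact eq_of_heq (Sigma.mk.inj_iff.mp (eq_of_heq h)).2

section LinExt

variable {C : Type u} [Category.{v} C] {N : FactCat C ⥤ AddCommGrpCat.{w₁}} (L : LinExt C N)

theorem elCast_eq_zero_iff {x y : C} {f g : x ⟶ y} (h : f = g) (a : elN N (mk3 f)) :
    elCast N h a = 0 ↔ a = 0 := by
  subst h
  rfl

theorem fpush_zero {x y z : C} (g : x ⟶ y) (f : y ⟶ z) : fpush N g f 0 = 0 :=
  map_zero _

theorem LinExt.act_injective {x y : C} (e : L.hom x y) : Function.Injective (L.act e) := by
  intro a b hab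
  have hfree := L.act_free (L.act e b) (elCast N (L.act_q e b).symm (a - b))
  rw [L.act_add, add_sub_cancel, hab] at hfree
  exact sub_eq_zero.mp ((elCast_eq_zero_iff _ _).mp (hfree rfl))

theorem LinExt.surjective_morMap_qFunctor : Function.Surjective (morMap L.qFunctor) := by
  rintro ⟨x, y, f⟩
  obtain ⟨e, rfl⟩ := L.q_surj f
  exact ⟨⟨x, y, e⟩, rfl⟩

theorem LinExt.nonempty_fiber_equiv (m : Mor C) :
    Nonempty ({m' // morMap L.qFunctor m' = m} ≃ elN N m) := by
  obtain ⟨x, y, f⟩ := m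
  obtain ⟨e₀, rfl⟩ := L.q_surj f
  let lift : elN N (mk3 (L.q e₀)) → {m' // morMap L.qFunctor m' = mk3 (L.q e₀)} :=
    fun a => ⟨mk3 (C := L.Carrier) (L.act e₀ a), congrArg mk3 (L.act_q e₀ a)⟩
  refine ⟨(Equiv.ofBijective lift ⟨fun a b hab => ?_, ?_⟩).symm⟩
  · exact L.act_injective e₀ (mk3_injective (C := L.Carrier) (congrArg Subtype.val hab))
  · rintro ⟨⟨x', y', e⟩, he⟩
    obtain ⟨rfl, he⟩ := Sigma.mk.inj_iff.mp he
    obtain ⟨rfl, he⟩ := Sigma.mk.inj_iff.mp (eq_of_heq he)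
    obtain ⟨a, ha⟩ := L.act_trans e₀ e (eq_of_heq he).symm
    exact ⟨a, Subtype.ext (congrArg (mk3 (C := L.Carrier)) ha)⟩

end LinExt

section InducedNS

variable {C : Type u} [Category.{v} C] {H' : C ⥤ AddCommGrpCat.{w₁}}

theorem elCast_inducedNS {x y : C} {f g : x ⟶ y} (h : f = g)
    (a : elN (inducedNS H') (mk3 f)) : elCast (inducedNS H') h a = a := by
  subst h
  rfl

theorem fpull_inducedNS {x y z : C} (g : x ⟶ y) (f : y ⟶ z)
    (a : elN (inducedNS H') (mk3 f)) : fpull (inducedNS H') g f a = a := by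
  show H'.map (𝟙 z) a = a
  rw [H'.map_id]
  rfl

variable (L : LinExt C (inducedNS H'))

theorem LinExt.comp_act_of_inducedNS {x y z : C} (f₀ : L.hom x y) (g₀ : L.hom y z)
    (α : elN (inducedNS H') (mk3 (L.q g₀))) :
    L.comp' f₀ (L.act g₀ α) = L.act (L.comp' f₀ g₀) α := by
  have hdistrib := L.distrib f₀ g₀ 0 α
  rw [L.act_zero, fpush_zero, zero_add, fpull_inducedNS] at hdistrib
  exact hdistrib.trans (congrArg (L.act _) (elCast_inducedNS _ _))

end InducedNS

section Groupoid

variable {C : Type u} [Groupoid.{v} C] {H' : C ⥤ AddCommGrpCat.{w₁}}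
  (L : LinExt C (inducedNS H'))

instance LinExt.isIso_of_inducedNS {x y : L.Carrier} (e : x ⟶ y) : IsIso e := by
  refine isIso_of_forall_exists_comp_eq_id (D := L.Carrier)
    (fun {x y : C} (e : L.hom x y) => ?_) e
  obtain ⟨r₀, hr₀⟩ := L.q_surj (inv (L.q e))
  obtain ⟨γ, hγ⟩ := L.act_trans (L.comp' e r₀) (L.id' x) <| by
    rw [L.q_comp, hr₀, L.q_id, IsIso.hom_inv_id]
  exact ⟨L.act r₀ γ, (L.comp_act_of_inducedNS e r₀ γ).trans hγ⟩

noncomputable def LinExt.invFunctor : ContraFunctor L.Carrier where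
  obj x := x
  map e := inv e
  map_id _ := IsIso.inv_id
  map_comp _ _ := IsIso.inv_comp

theorem LinExt.invFunctor_onMor_involutive : Function.Involutive L.invFunctor.onMor := by
  rintro ⟨x, y, e⟩
  show (⟨x, y, inv (inv e)⟩ : Mor L.Carrier) = ⟨x, y, e⟩
  rw [IsIso.inv_inv]

theorem LinExt.morMap_invFunctor_onMor (m : Mor L.Carrier) :
    morMap L.qFunctor (L.invFunctor.onMor m) = morInv (morMap L.qFunctor m) := by
  obtain ⟨x, y, e⟩ := m
  simp only [morMap, morInv, ContraFunctor.onMor, LinExt.invFunctor, Functor.map_inv,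
    Groupoid.inv_eq_inv]
  rfl

theorem LinExt.snd_image_compFiber_preimage (σ τ : Set (Mor C)) (m' : Mor L.Carrier) :
    Prod.snd '' compFiber (morMap L.qFunctor ⁻¹' σ) (morMap L.qFunctor ⁻¹' τ) m' =
      morMap L.qFunctor ⁻¹' (Prod.snd '' compFiber σ τ (morMap L.qFunctor m')) := by
  ext c'
  constructor
  · rintro ⟨⟨a', c'⟩, ⟨ha', hc', hcomp⟩, rfl⟩
    exact ⟨(_, _), ⟨ha', hc', hcomp.map L.qFunctor⟩, rfl⟩
  · rintro ⟨⟨a, c⟩, ⟨ha, hc, hcomp⟩, hc'⟩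
    obtain rfl : morMap L.qFunctor c' = c := hc'.symm
    obtain ⟨a', hcomp'⟩ := exists_isComp_of_isIso (c := c') (m := m') hcomp.src_eq_s10
    have hqa' : morMap L.qFunctor a' = a := (hcomp'.map L.qFunctor).left_unique hcomp
    exact ⟨(a', c'), ⟨show _ ∈ σ from hqa' ▸ ha, hc, hcomp'⟩, rfl⟩

theorem LinExt.nonempty_compFiber_preimage_equiv (hconn : ∀ x y : C, Nonempty (x ⟶ y))
    (σ τ : Set (Mor C)) (m' : Mor L.Carrier) (y₀ : C) :
    Nonempty (compFiber (morMap L.qFunctor ⁻¹' σ) (morMap L.qFunctor ⁻¹' τ) m' ≃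
      compFiber σ τ (morMap L.qFunctor m') × H'.obj y₀) := by
  have hfib (c : Mor C) : Nonempty ({c' // morMap L.qFunctor c' = c} ≃ H'.obj y₀) :=
    let ⟨e⟩ := L.nonempty_fiber_equiv c
    ⟨e.trans (H'.mapIso (asIso (hconn c.tgt y₀).some)).addCommGroupIsoToAddEquiv.toEquiv⟩
  obtain ⟨e⟩ := nonempty_preimage_equiv_prod (morMap L.qFunctor)
    (Prod.snd '' compFiber σ τ (morMap L.qFunctor m')) hfib
  have hinjE := injOn_snd_compFiber (fun _ => inferInstance)
    (morMap L.qFunctor ⁻¹' σ) (morMap L.qFunctor ⁻¹' τ) m'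
  have hinjC := injOn_snd_compFiber (fun _ => inferInstance) σ τ (morMap L.qFunctor m')
  exact ⟨(Equiv.Set.imageOfInjOn _ _ hinjE).trans <|
    (Equiv.setCongr (L.snd_image_compFiber_preimage σ τ m')).trans <|
    e.trans <| (Equiv.Set.imageOfInjOn _ _ hinjC).symm.prodCongr (Equiv.refl _)⟩

noncomputable def LinExt.liftAssnSchemoid (hconn : ∀ x y : C, Nonempty (x ⟶ y))
    (A : AssnSchemoid C) (hT : ∀ m : Mor C, A.T.onMor m = morInv m) :
    AssnSchemoid L.Carrier where
  part := preimagePart L A.part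
  isPartition := A.isPartition.preimage_of_surjective L.surjective_morMap_qFunctor
  concat := by
    rintro _ ⟨σ, hσ, rfl⟩ _ ⟨τ, hτ, rfl⟩ _ ⟨μ, hμ, rfl⟩ f' hf' g' hg'
    obtain ⟨ef⟩ := L.nonempty_compFiber_preimage_equiv hconn σ τ f' f'.src
    obtain ⟨eg⟩ := L.nonempty_compFiber_preimage_equiv hconn σ τ g' f'.src
    obtain ⟨eC⟩ := A.concat σ hσ τ hτ μ hμ _ hf' _ hg'
    exact ⟨ef.trans ((eC.prodCongr (Equiv.refl _)).trans eg.symm)⟩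
  T := L.invFunctor
  T_invol := L.invFunctor_onMor_involutive
  T_part := by
    rintro _ ⟨σ, hσ, rfl⟩
    refine ⟨A.T.onMor '' σ, A.T_part σ hσ, ?_⟩
    have hcomm : morMap L.qFunctor ∘ L.invFunctor.onMor = A.T.onMor ∘ morMap L.qFunctor :=
      funext fun m => (L.morMap_invFunctor_onMor m).trans (hT _).symm
    rw [L.invFunctor_onMor_involutive.image_eq_preimage_symm,
      Function.Involutive.image_eq_preimage_symm A.T_invol,
      ← Set.preimage_comp, ← Set.preimage_comp, hcomm]
  endo := by
    rintro _ ⟨σ, hσ, rfl⟩ ⟨m', hm'σ, hm'J⟩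
    exact fun n' hn' => A.endo σ hσ ⟨_, hm'σ, hm'J⟩ hn'

end Groupoid

/-- Theorem 5.4 of Kuribayashi–Matsuo: let `H : C → K-Mod` be a functor, `D = π*p*H`
the induced natural system and `D₊ → E → C` a linear extension. If `(C,S,T)` is an
association schemoid whose underlying category is a connected groupoid with
`T(f) = f⁻¹`, then the quasi-schemoid `(E, S̃)`, `S̃ = {q⁻¹(σ)}`, admits an association
schemoid structure in which `E` is a groupoid, `T̃(f̃) = f̃⁻¹` and `q` is a morphism of
association schemoids; moreover `p^σ_{τμ} = ♯D_g ⬝ p^{q(σ)}_{q(τ)q(μ)}` for any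
morphism `g` of `C`. -/
theorem linExt_schemoid_structure
    {C : Type u} [Groupoid.{v} C] (A : AssnSchemoid C)
    (hconn : ∀ x y : C, Nonempty (x ⟶ y))
    (hT : ∀ m : Mor C, A.T.onMor m = morInv m)
    (R : Type) [CommRing R] (HH : C ⥤ ModuleCat.{0} R)
    (L : LinExt C (inducedNS (HH ⋙ forget₂ (ModuleCat.{0} R) AddCommGrpCat.{0}))) :
    ∃ A' : AssnSchemoid L.Carrier,
      A'.part = preimagePart L A.part ∧
      -- `E` is a groupoid and `T̃(f̃) = f̃⁻¹`
      (∀ m : Mor L.Carrier, ∃ ginv : m.2.1 ⟶ m.1,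
        m.2.2 ≫ ginv = 𝟙 m.1 ∧ ginv ≫ m.2.2 = 𝟙 m.2.1 ∧
        A'.T.onMor m = ⟨m.2.1, m.1, ginv⟩) ∧
      -- `q` is a morphism of association schemoids
      IsASMor A'.part A.part A'.T A.T L.qFunctor ∧
      -- the structure constants
      (∀ σ₀ ∈ A.part, ∀ τ₀ ∈ A.part, ∀ μ₀ ∈ A.part, ∀ g : Mor C,
        ∀ m' : Mor L.Carrier, morMap L.qFunctor m' ∈ σ₀ → ∀ m ∈ σ₀,
          Nat.card (compFiber (morMap L.qFunctor ⁻¹' τ₀) (morMap L.qFunctor ⁻¹' μ₀) m') =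
            Nat.card (elN (inducedNS (HH ⋙ forget₂ (ModuleCat.{0} R) AddCommGrpCat.{0})) g) *
              Nat.card (compFiber τ₀ μ₀ m)) := by
  refine ⟨L.liftAssnSchemoid hconn A hT, rfl, fun m => ⟨inv m.2.2, IsIso.hom_inv_id _, IsIso.inv_hom_id _, rfl⟩,
    ⟨fun σ ⟨σ₀, hσ₀, hσ⟩ => ⟨σ₀, hσ₀, hσ ▸ Set.image_preimage_subset _ _⟩,
      fun m => (L.morMap_invFunctor_onMor m).trans (hT _).symm⟩, ?_⟩
  intro σ₀ hσ₀ τ₀ hτ₀ μ₀ hμ₀ g m' hm' m hm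
  obtain ⟨eE⟩ := L.nonempty_compFiber_preimage_equiv hconn τ₀ μ₀ m' g.tgt
  obtain ⟨eC⟩ := A.concat τ₀ hτ₀ μ₀ hμ₀ σ₀ hσ₀ _ hm' m hm
  rw [Nat.card_congr (eE.trans (eC.prodCongr (Equiv.refl _))), Nat.card_prod, mul_comm]
  rfl
end
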